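/- Acyclicity of the union of leading simple paths (Lemma on the DAG structure, part 1): Let V be a finite set, E ⊆ V × V, c : V × V → ℕ a cost function, and σ* ∈ V such that every vertex of V is reachable from σ* by an E-walk. Call a simple E-path (pairwise distinct vertices) from σ* to σ leading if its total cost is minimal among all simple E-paths from σ* to σ, and let 𝕋 ⊆ E be the set of edges belonging to at least one leading simple path to some vertex of V. Assume every directed E-cycle (closed E-walk traversing at least one edge) has strictly positive total cost. Then 𝕋 contains no directed cycle: there is no closed walk traversing at least one edge that uses only edges of 𝕋. -/

import Mathlib

/-!
Let `d v` be the least cost of a simple path from `σ*` to `v`. Every prefix of a leading path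
is leading, so along each edge `(u, v)` of `𝕋` we have `d v = d u + c (u, v)`. Hence `d`
telescopes along any walk in `𝕋`, and a closed walk in `𝕋` has cost `0`. As `𝕋 ⊆ E`, such a
walk would be a directed `E`-cycle of cost `0`.
-/

/-- The total cost of a walk: the sum of the edge costs along its consecutive
pairs; the empty sum is `0`. -/
def walkCost {V : Type*} (c : V × V → ℕ) : List V → ℕ
  | [] => 0
  | [_] => 0
  | a :: b :: l => c (a, b) + walkCost c (b :: l)

/-- `l` is an `E`-walk from `x` to `y`: a nonempty sequence starting at `x`,
ending at `y`, all of whose consecutive pairs are edges of `E`. -/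
def IsWalkOn {V : Type*} (E : Set (V × V)) (x y : V) (l : List V) : Prop :=
  l ≠ [] ∧ l.head? = some x ∧ l.getLast? = some y ∧ l.Chain' (fun u v => (u, v) ∈ E)

/-- `l` is a leading simple `E`-path from `σ*` to `σ`: a simple path (pairwise
distinct vertices) of minimal total cost among all simple `E`-paths from `σ*`
to `σ`. -/
def IsLeadingSimplePath {V : Type*} (E : Set (V × V)) (c : V × V → ℕ) (σs σ : V)
    (l : List V) : Prop :=
  IsWalkOn E σs σ l ∧ l.Nodup ∧
    ∀ l' : List V, IsWalkOn E σs σ l' → l'.Nodup → walkCost c l ≤ walkCost c l'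

/-- The set `𝕋` of edges belonging to at least one leading simple path from
`σ*` to some vertex. -/
def leadingEdges {V : Type*} (E : Set (V × V)) (c : V × V → ℕ) (σs : V) : Set (V × V) :=
  {e | ∃ (σ : V) (l : List V), IsLeadingSimplePath E c σs σ l ∧ e ∈ l.zip l.tail}

theorem List.exists_eq_append_cons_append_cons_of_not_nodup {α : Type*} {l : List α}
    (h : ¬ l.Nodup) : ∃ (v : α) (p q r : List α), l = p ++ v :: q ++ v :: r := by
  induction l with
  | nil => simp at h
  | cons a t ih =>
    by_cases ha : a ∈ t
    · obtain ⟨q, r, rfl⟩ := List.append_of_mem ha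
      exact ⟨a, [], q, r, rfl⟩
    · obtain ⟨v, p, q, r, rfl⟩ := ih (by simpa [ha] using h)
      exact ⟨v, a :: p, q, r, rfl⟩

theorem List.exists_eq_append_cons_cons_of_mem_zip_tail {α : Type*} {l : List α} {a b : α}
    (h : (a, b) ∈ l.zip l.tail) : ∃ p s, l = p ++ a :: b :: s := by
  induction l with
  | nil => simp at h
  | cons x t ih =>
    cases t with
    | nil => simp at h
    | cons y t =>
      rcases List.mem_cons.1 h with h | h
      · simp only [Prod.mk.injEq] at h
        exact ⟨[], t, by simp [h]⟩
      · obtain ⟨p, s, hps⟩ := ih h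
        exact ⟨x :: p, s, by simp [hps]⟩

section Walks

variable {V : Type*} {E F : Set (V × V)} {c : V × V → ℕ} {x y u : V}

theorem isWalkOn_iff {l : List V} : IsWalkOn E x y l ↔
    l ≠ [] ∧ l.head? = some x ∧ l.getLast? = some y ∧ l.IsChain (fun u v => (u, v) ∈ E) :=
  Iff.rfl

theorem isWalkOn_cons_cons {a b : V} {l : List V} :
    IsWalkOn E x y (a :: b :: l) ↔ x = a ∧ (a, b) ∈ E ∧ IsWalkOn E b y (b :: l) := by
  simp only [isWalkOn_iff, List.isChain_cons_cons, List.getLast?_cons_cons, List.head?_cons]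
  grind

theorem isWalkOn_singleton {a : V} : IsWalkOn E x y [a] ↔ x = a ∧ y = a := by
  simp [isWalkOn_iff, eq_comm]

theorem isWalkOn_append_cons {p s : List V} :
    IsWalkOn E x y (p ++ u :: s) ↔ IsWalkOn E x u (p ++ [u]) ∧ IsWalkOn E u y (u :: s) := by
  have hhead : (p ++ u :: s).head? = (p ++ [u]).head? := by cases p <;> rfl
  have hlast : (p ++ u :: s).getLast? = (u :: s).getLast? :=
    List.getLast?_append_of_ne_nil _ (List.cons_ne_nil _ _)
  rw [isWalkOn_iff, isWalkOn_iff, isWalkOn_iff, hhead, hlast, List.isChain_split]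
  simp only [List.getLast?_concat, List.head?_cons, ne_eq, List.append_eq_nil_iff,
    List.cons_ne_nil, and_false, not_false_eq_true, true_and]
  tauto

theorem walkCost_append_cons (c : V × V → ℕ) (p : List V) (u : V) (s : List V) :
    walkCost c (p ++ u :: s) = walkCost c (p ++ [u]) + walkCost c (u :: s) := by
  induction p with
  | nil => simp [walkCost]
  | cons a p ih =>
    cases p with
    | nil => simp [walkCost]
    | cons b p =>
      simp only [List.cons_append, walkCost] at ih ⊢
      omega

theorem IsWalkOn.mono (hEF : E ⊆ F) {l : List V} (h : IsWalkOn E x y l) : IsWalkOn F x y l :=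
  ⟨h.1, h.2.1, h.2.2.1, List.IsChain.imp (fun _ _ he => hEF he) h.2.2.2⟩

-- Cut out the closed subwalk between two visits of a vertex; costs in `ℕ` make this cheaper.
theorem IsWalkOn.exists_nodup_walkCost_le {l : List V} (h : IsWalkOn E x y l) :
    ∃ l', IsWalkOn E x y l' ∧ l'.Nodup ∧ walkCost c l' ≤ walkCost c l := by
  by_cases hl : l.Nodup
  · exact ⟨l, h, hl, le_rfl⟩
  obtain ⟨v, p, q, r, rfl⟩ := List.exists_eq_append_cons_append_cons_of_not_nodup hl
  rw [show p ++ v :: q ++ v :: r = p ++ v :: (q ++ v :: r) by simp] at h ⊢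
  obtain ⟨hp, hqr⟩ := isWalkOn_append_cons.1 h
  obtain ⟨-, hr⟩ := (isWalkOn_append_cons (p := v :: q)).1 hqr
  obtain ⟨l', hl', hnodup, hcost⟩ := (isWalkOn_append_cons.2 ⟨hp, hr⟩).exists_nodup_walkCost_le
  refine ⟨l', hl', hnodup, hcost.trans ?_⟩
  have hloop := walkCost_append_cons c (v :: q) v r
  rw [walkCost_append_cons, walkCost_append_cons c p v (q ++ v :: r)]
  simp only [List.cons_append] at hloop
  omega
termination_by l.length
decreasing_by simp_all

theorem IsWalkOn.add_walkCost_eq {d : V → ℕ} (hd : ∀ u v, (u, v) ∈ E → d u + c (u, v) = d v) :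
    ∀ {x : V} {l : List V}, IsWalkOn E x y l → d x + walkCost c l = d y
  | _, [], h => absurd rfl h.1
  | _, [_], h => by
    obtain ⟨rfl, rfl⟩ := isWalkOn_singleton.1 h
    rfl
  | _, _ :: _ :: _, h => by
    obtain ⟨rfl, hab, hrest⟩ := isWalkOn_cons_cons.1 h
    have hrest := hrest.add_walkCost_eq hd
    have hab := hd _ _ hab
    simp only [walkCost]
    omega

end Walks

section Leading

variable {V : Type*} {E : Set (V × V)} {c : V × V → ℕ} {σs σ u v : V}

/-- Otherwise a cheaper simple path to `u`, continued along the leading path and made simple,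
would be a cheaper simple path to `σ`. -/
theorem IsLeadingSimplePath.prefix {p s : List V}
    (h : IsLeadingSimplePath E c σs σ (p ++ u :: s)) :
    IsLeadingSimplePath E c σs u (p ++ [u]) := by
  obtain ⟨hwalk, hnodup, hmin⟩ := h
  obtain ⟨hp, hs⟩ := isWalkOn_append_cons.1 hwalk
  refine ⟨hp, hnodup.sublist (by simp), fun l' hl' _ => ?_⟩
  obtain ⟨l'', rfl⟩ := List.getLast?_eq_some_iff.1 hl'.2.2.1
  obtain ⟨w, hw, hwnodup, hwcost⟩ :=
    (isWalkOn_append_cons.2 ⟨hl', hs⟩).exists_nodup_walkCost_le (c := c)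
  have hle := hmin w hw hwnodup
  rw [walkCost_append_cons] at hwcost hle
  omega

noncomputable def simplePathCost (E : Set (V × V)) (c : V × V → ℕ) (σs u : V) : ℕ :=
  sInf (walkCost c '' {l | IsWalkOn E σs u l ∧ l.Nodup})

theorem IsLeadingSimplePath.walkCost_eq {l : List V} (h : IsLeadingSimplePath E c σs u l) :
    walkCost c l = simplePathCost E c σs u :=
  le_antisymm
    (le_csInf ⟨_, l, ⟨h.1, h.2.1⟩, rfl⟩ fun _ ⟨l', ⟨hl', hnodup⟩, hcost⟩ =>
      hcost ▸ h.2.2 l' hl' hnodup)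
    (Nat.sInf_le ⟨l, ⟨h.1, h.2.1⟩, rfl⟩)

theorem simplePathCost_add_eq_of_mem_leadingEdges (h : (u, v) ∈ leadingEdges E c σs) :
    simplePathCost E c σs u + c (u, v) = simplePathCost E c σs v := by
  obtain ⟨σ, l, hlead, hmem⟩ := h
  obtain ⟨p, s, rfl⟩ := List.exists_eq_append_cons_cons_of_mem_zip_tail hmem
  have hu := hlead.prefix
  have hv := (show IsLeadingSimplePath E c σs σ ((p ++ [u]) ++ v :: s) by simpa using hlead).prefix
  rw [← hu.walkCost_eq, ← hv.walkCost_eq, List.append_assoc, List.singleton_append,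
    walkCost_append_cons c p u [v]]
  simp [walkCost]

theorem leadingEdges_subset : leadingEdges E c σs ⊆ E := by
  rintro ⟨u, v⟩ ⟨σ, l, hlead, hmem⟩
  obtain ⟨p, s, rfl⟩ := List.exists_eq_append_cons_cons_of_mem_zip_tail hmem
  exact (isWalkOn_cons_cons.1 (isWalkOn_append_cons.1 hlead.1).2).2.1

end Leading

theorem leading_edges_acyclic_general {V : Type*}
    (E : Set (V × V)) (c : V × V → ℕ) (σs : V)
    (hcycle : ∀ (x : V) (l : List V), IsWalkOn E x x l → 2 ≤ l.length → 0 < walkCost c l) :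
    ¬ ∃ (x : V) (l : List V), IsWalkOn (leadingEdges E c σs) x x l ∧ 2 ≤ l.length := by
  rintro ⟨x, l, hl, hlen⟩
  have hzero : walkCost c l = 0 := by
    simpa using hl.add_walkCost_eq fun _ _ => simplePathCost_add_eq_of_mem_leadingEdges
  exact (hcycle x l (hl.mono leadingEdges_subset) hlen).ne' hzero

/-- **Acyclicity of the union of leading simple paths.** If every vertex is
reachable from `σ*` and every directed `E`-cycle (closed walk traversing at
least one edge) has strictly positive total cost, then `𝕋` contains no
directed cycle. -/
theorem leading_edges_acyclic {V : Type*} [Fintype V]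
    (E : Set (V × V)) (c : V × V → ℕ) (σs : V)
    (hreach : ∀ σ : V, ∃ l : List V, IsWalkOn E σs σ l)
    (hcycle : ∀ (x : V) (l : List V), IsWalkOn E x x l → 2 ≤ l.length → 0 < walkCost c l) :
    ¬ ∃ (x : V) (l : List V), IsWalkOn (leadingEdges E c σs) x x l ∧ 2 ≤ l.length :=
  leading_edges_acyclic_general E c σs hcycle
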